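/- arXiv:math/0608035 — 2 statements merged into one kernel-verified Lean document; each statement's English description precedes it below -/
import Mathlib

section
/- If Y is a separable metric space, then there exists a Bernstein tree in Y rooted at the empty sequence: a family {D^q : q ∈ 2^{<ω₁}} of subsets of Y such that for each q, neither D^q nor Y \ D^q contains a homeomorphic copy of the Cantor set; D^{q⌢0} ∩ D^{q⌢1} = ∅ for each q; and D^r ⊆ D^q whenever r extends q. -/
noncomputable def omega1 : Ordinal := (Cardinal.aleph 1).ord

/-- An element of A^{<ω₁}: a sequence of elements of A of countable ordinal length
(the values of `fn` at ordinals ≥ `len` are irrelevant). -/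
structure CSeq.{u_1, u_2} (A : Type u_1) where
  len : Ordinal.{u_2}
  len_lt : len < omega1.{u_2}
  fn : Ordinal.{u_2} → A

/-- Reverse extension: p ≤ q iff p extends q. This makes A^{<ω₁} a forcing preorder. -/
instance {A : Type*} : Preorder (CSeq A) where
  le p q := q.len ≤ p.len ∧ ∀ η < q.len, p.fn η = q.fn η
  le_refl p := ⟨le_rfl, fun _ _ => rfl⟩
  le_trans p q r hpq hqr :=
    ⟨hqr.1.trans hpq.1, fun η hη =>
      (hpq.2 η (lt_of_lt_of_le hη hqr.1)).trans (hqr.2 η hη)⟩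

/-- S contains a homeomorphic copy of the Cantor set 2^ω. -/
def HasCantorSubset {Y : Type*} [TopologicalSpace Y] (S : Set Y) : Prop :=
  ∃ C : Set Y, C ⊆ S ∧ Nonempty (C ≃ₜ (ℕ → Bool))

/-- The extension q⌢i of a countable binary sequence q by one more value i. -/
noncomputable def CSeq.snoc (q : CSeq Bool) (i : Bool) : CSeq Bool :=
  ⟨Order.succ q.len,
    (Cardinal.isSuccLimit_ord (Cardinal.aleph0_le_aleph 1)).succ_lt q.len_lt,
    fun η => if η = q.len then i else q.fn η⟩

open Cardinal Ordinal Set Function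

universe u

/-! ### Auxiliary: a system-of-distinct-representatives lemma -/

/-- If `I` has at most continuum many elements and each `S i` has at least continuum many
elements, we can pick injectively one element from each `S i`. -/
lemma sdr_lemma {Y : Type} {I : Type u} (S : I → Set Y) (hI : #I ≤ 𝔠)
    (hS : ∀ i, 𝔠 ≤ Cardinal.lift.{u} #(S i)) :
    ∃ f : I → Y, Function.Injective f ∧ ∀ i, f i ∈ S i := by
  classical
  cases isEmpty_or_nonempty I with
  | inl h => exact ⟨fun i => isEmptyElim i, fun i => isEmptyElim i, fun i => isEmptyElim i⟩
  | inr hne =>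
  obtain ⟨i0⟩ := hne
  have hY : Nonempty Y := by
    have h0 : #(S i0) ≠ 0 := by
      intro h
      have h' := hS i0
      rw [h, Cardinal.lift_zero] at h'
      exact Cardinal.continuum_ne_zero (le_zero_iff.mp h')
    exact ⟨(Cardinal.mk_ne_zero_iff.mp h0).some.1⟩
  set o : Ordinal.{u} := Cardinal.continuum.ord with ho
  haveI : IsWellOrder o.ToType (· < ·) := isWellOrder_lt
  have hT : #o.ToType = 𝔠 := by rw [Cardinal.mk_toType, ho, Cardinal.card_ord]
  obtain ⟨e⟩ : Nonempty (I ↪ o.ToType) := by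
    rw [← Cardinal.le_def, hT]; exact hI
  have key : ∀ (t : o.ToType) (p : ∀ s, s < t → Y) (j : I),
      ∃ y, y ∈ S j ∧ ∀ s (hs : s < t), p s hs ≠ y := by
    intro t p j
    by_contra hcon
    push_neg at hcon
    have hinj : ∃ φ : (S j) → {s : o.ToType // s < t}, Function.Injective φ := by
      have hch : ∀ y : S j, ∃ s : {s : o.ToType // s < t}, p s.1 s.2 = y.1 := by
        intro y
        obtain ⟨s, hs, hps⟩ := hcon y.1 y.2
        exact ⟨⟨s, hs⟩, hps⟩
      choose φ hφ using hch
      refine ⟨φ, fun y1 y2 h12 => ?_⟩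
      apply Subtype.ext
      rw [← hφ y1, ← hφ y2, h12]
    obtain ⟨φ, hφ⟩ := hinj
    have h1 : Cardinal.lift.{u} #(S j) ≤ Cardinal.lift.{0} #{s : o.ToType // s < t} :=
      Cardinal.lift_mk_le'.mpr ⟨⟨φ, hφ⟩⟩
    rw [Cardinal.lift_uzero] at h1
    have h2 : #{s : o.ToType // s < t} < 𝔠 := by
      have hc : #{s : o.ToType // s < t} = (Ordinal.typein (· < ·) t).card :=
        (Ordinal.card_typein t).symm
      rw [hc]
      exact Cardinal.lt_ord.mp (Ordinal.typein_lt_self t)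
    exact absurd ((hS j).trans h1) (not_le.mpr h2)
  let F : ∀ t : o.ToType, (∀ s, s < t → Y) → Y := fun t p =>
    if h : ∃ i, e i = t then Classical.choose (key t p (Classical.choose h))
    else hY.some
  let g : o.ToType → Y := WellFounded.fix wellFounded_lt F
  have hg : ∀ t, g t = F t fun s _ => g s := fun t =>
    WellFounded.fix_eq wellFounded_lt F t
  have hg2 : ∀ i : I, g (e i) ∈ S i ∧ ∀ s (hs : s < e i), g s ≠ g (e i) := by
    intro i
    have h : ∃ i', e i' = e i := ⟨i, rfl⟩
    have heq : g (e i) = Classical.choose (key (e i) (fun s _ => g s) (Classical.choose h)) := by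
      rw [hg]; exact dif_pos h
    have hsp := Classical.choose_spec (key (e i) (fun s _ => g s) (Classical.choose h))
    have hii : Classical.choose h = i := e.injective (Classical.choose_spec h)
    rw [hii] at heq hsp
    rw [heq]
    exact hsp
  refine ⟨fun i => g (e i), ?_, fun i => (hg2 i).1⟩
  intro i j hij
  by_contra hne
  have hene : e i ≠ e j := fun h => hne (e.injective h)
  rcases lt_or_gt_of_ne hene with h | h
  · exact (hg2 j).2 (e i) h hij
  · exact (hg2 i).2 (e j) h hij.symm

/-! ### Cylinders indexed by `omega1.ToType` -/

noncomputable def e1 : Set.Iio omega1.{u} ≃o omega1.{u}.ToType := Ordinal.ToType.mk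

def J0 : Type u := Σ t : omega1.{u}.ToType, ({s : omega1.{u}.ToType // s < t} → Bool)

noncomputable def val0 (j : J0.{u}) : Ordinal.{u} → Bool := fun η =>
  if hη : η < (e1.symm j.1).1 then
    j.2 ⟨e1 ⟨η, hη.trans (e1.symm j.1).2⟩, by
      have h2 : (⟨η, hη.trans (e1.symm j.1).2⟩ : Set.Iio omega1) < e1.symm j.1 := hη
      have h3 := e1.strictMono h2
      rwa [OrderIso.apply_symm_apply] at h3⟩
  else false

noncomputable def enc0 (q : CSeq.{0, u} Bool) : J0.{u} :=
  ⟨e1 ⟨q.len, q.len_lt⟩, fun s => q.fn (e1.symm s.1).1⟩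

lemma val0_enc0 (q : CSeq.{0, u} Bool) {η : Ordinal.{u}} (hη : η < q.len) :
    val0 (enc0 q) η = q.fn η := by
  have h1 : e1.symm (enc0 q).1 = ⟨q.len, q.len_lt⟩ := e1.symm_apply_apply _
  have hcond : η < (e1.symm (enc0 q).1).1 := by rw [h1]; exact hη
  unfold val0
  rw [dif_pos hcond]
  show q.fn (e1.symm (e1 ⟨η, _⟩)).1 = q.fn η
  rw [e1.symm_apply_apply]

/-! ### Counting Cantor subsets -/

lemma mk_cantor_le (Y : Type) [MetricSpace Y] [TopologicalSpace.SeparableSpace Y] :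
    #{C : Set Y // Nonempty (C ≃ₜ (ℕ → Bool))} ≤ 𝔠 := by
  classical
  haveI : SecondCountableTopology Y :=
    UniformSpace.secondCountable_of_separable Y
  obtain ⟨b, hbc, -, hb⟩ := TopologicalSpace.exists_countable_basis Y
  have hclosed : ∀ C : Set Y, Nonempty (C ≃ₜ (ℕ → Bool)) → IsClosed C := by
    intro C hC
    haveI : CompactSpace (C : Set Y) := hC.some.symm.compactSpace
    exact (isCompact_iff_compactSpace.mpr this).isClosed
  have hinj : Function.Injective
      (fun C : {C : Set Y // Nonempty (C ≃ₜ (ℕ → Bool))} =>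
        ({U : ↥b | (U : Set Y) ⊆ (C.1)ᶜ} : Set ↥b)) := by
    intro C C' hCC'
    have hkey := Set.ext_iff.mp
      (show {U : ↥b | (U : Set Y) ⊆ (C.1)ᶜ} = {U : ↥b | (U : Set Y) ⊆ (C'.1)ᶜ} from hCC')
    have hopen : IsOpen (C.1)ᶜ := (hclosed C.1 C.2).isOpen_compl
    have hopen' : IsOpen (C'.1)ᶜ := (hclosed C'.1 C'.2).isOpen_compl
    have h1 : (C.1)ᶜ = ⋃₀ {s ∈ b | s ⊆ (C.1)ᶜ} := hb.open_eq_sUnion' hopen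
    have h2 : (C'.1)ᶜ = ⋃₀ {s ∈ b | s ⊆ (C'.1)ᶜ} := hb.open_eq_sUnion' hopen'
    have hsets : {s ∈ b | s ⊆ (C.1)ᶜ} = {s ∈ b | s ⊆ (C'.1)ᶜ} := by
      ext s
      constructor
      · rintro ⟨hsb, hss⟩
        exact ⟨hsb, (hkey ⟨s, hsb⟩).mp hss⟩
      · rintro ⟨hsb, hss⟩
        exact ⟨hsb, (hkey ⟨s, hsb⟩).mpr hss⟩
    have hcc : (C.1)ᶜ = (C'.1)ᶜ := by rw [h1, h2, hsets]
    exact Subtype.ext (compl_injective hcc)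
  calc #{C : Set Y // Nonempty (C ≃ₜ (ℕ → Bool))} ≤ #(Set ↥b) :=
        Cardinal.mk_le_of_injective hinj
    _ = 2 ^ #↥b := Cardinal.mk_set
    _ ≤ 2 ^ ℵ₀ := by
        haveI := hbc.to_subtype
        exact Cardinal.power_le_power_left two_ne_zero Cardinal.mk_le_aleph0
    _ = 𝔠 := Cardinal.two_power_aleph0

lemma mk_J0_le : #J0.{u} ≤ 𝔠 := by
  haveI : IsWellOrder omega1.{u}.ToType (· < ·) := isWellOrder_lt
  have hJ : #J0.{u} = Cardinal.sum fun t : omega1.{u}.ToType =>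
      #({s : omega1.{u}.ToType // s < t} → Bool) := Cardinal.mk_sigma _
  rw [hJ]
  have hstep : ∀ t : omega1.{u}.ToType, #({s : omega1.{u}.ToType // s < t} → Bool) ≤ 𝔠 := by
    intro t
    have hA : #{s : omega1.{u}.ToType // s < t} ≤ ℵ₀ := by
      have h0 : #{s : omega1.{u}.ToType // s < t} = (Ordinal.typein (· < ·) t).card :=
        (Ordinal.card_typein t).symm
      rw [h0]
      have h1 : Ordinal.typein (· < ·) t < (Cardinal.aleph 1).ord :=
        Ordinal.typein_lt_self (o := omega1.{u}) t
      have h2 := Cardinal.lt_ord.mp h1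
      rwa [← Cardinal.succ_aleph0, Order.lt_succ_iff] at h2
    calc #({s : omega1.{u}.ToType // s < t} → Bool)
        = 2 ^ #{s : omega1.{u}.ToType // s < t} := by
          rw [Cardinal.mk_arrow, Cardinal.mk_bool]; simp
      _ ≤ 2 ^ ℵ₀ := Cardinal.power_le_power_left two_ne_zero hA
      _ = 𝔠 := Cardinal.two_power_aleph0
  calc (Cardinal.sum fun t : omega1.{u}.ToType =>
        #({s : omega1.{u}.ToType // s < t} → Bool))
      ≤ Cardinal.sum fun _ : omega1.{u}.ToType => 𝔠 := Cardinal.sum_le_sum _ _ hstep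
    _ = #omega1.{u}.ToType * 𝔠 := Cardinal.sum_const' _ _
    _ = Cardinal.aleph 1 * 𝔠 := by
        rw [Cardinal.mk_toType]
        congr 1
        exact Cardinal.card_ord _
    _ ≤ 𝔠 * 𝔠 := mul_le_mul_left Cardinal.aleph_one_le_continuum _
    _ = 𝔠 := Cardinal.continuum_mul_self

/-- If Y is a separable metric space, then there is a Bernstein tree in Y
rooted at the empty sequence: a family {D^q : q ∈ 2^{<ω₁}} of subsets of Y such that no
D^q or its complement contains a Cantor set, D^(q⌢0) ∩ D^(q⌢1) = ∅, and D^r ⊆ D^q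
whenever r extends q. -/
theorem stmt15 (Y : Type) [MetricSpace Y] [TopologicalSpace.SeparableSpace Y] :
    ∃ D : CSeq Bool → Set Y,
      (∀ q, ¬ HasCantorSubset (D q) ∧ ¬ HasCantorSubset ((D q)ᶜ)) ∧
      (∀ q : CSeq Bool, D (q.snoc false) ∩ D (q.snoc true) = ∅) ∧
      (∀ q r : CSeq Bool, r ≤ q → D r ⊆ D q) := by
  classical
  set 𝒞 := {C : Set Y // Nonempty (C ≃ₜ (ℕ → Bool))} with h𝒞
  have hImk : #(ULift.{u_1} 𝒞 × Option J0.{u_1}) ≤ 𝔠 := by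
    rw [Cardinal.mk_prod]
    simp only [Cardinal.lift_id]
    calc #(ULift.{u_1} 𝒞) * #(Option J0.{u_1}) ≤ 𝔠 * 𝔠 := by
          apply mul_le_mul'
          · rw [Cardinal.mk_uLift]
            calc Cardinal.lift.{u_1} #𝒞 ≤ Cardinal.lift.{u_1} 𝔠 :=
                  Cardinal.lift_le.mpr (mk_cantor_le Y)
              _ = 𝔠 := Cardinal.lift_continuum
          · rw [Cardinal.mk_option]
            calc #J0.{u_1} + 1 ≤ 𝔠 + 𝔠 :=
                  add_le_add mk_J0_le
                    (Cardinal.one_le_aleph0.trans Cardinal.aleph0_le_continuum)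
              _ = 𝔠 := Cardinal.continuum_add_self
      _ = 𝔠 := Cardinal.continuum_mul_self
  have hSmk : ∀ i : ULift.{u_1} 𝒞 × Option J0.{u_1},
      𝔠 ≤ Cardinal.lift.{u_1} #(i.1.down.1 : Set Y) := by
    intro i
    have h1 : #(i.1.down.1 : Set Y) = #(ℕ → Bool) := Cardinal.mk_congr i.1.down.2.some.toEquiv
    have h2 : #(ℕ → Bool) = 𝔠 := by
      rw [Cardinal.mk_arrow, Cardinal.mk_bool, Cardinal.mk_nat]
      simp [Cardinal.two_power_aleph0]
    rw [h1, h2, Cardinal.lift_continuum]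
  obtain ⟨f, finj, fmem⟩ := sdr_lemma (fun i : ULift.{u_1} 𝒞 × Option J0.{u_1} => i.1.down.1)
    hImk hSmk
  let lab : ULift.{u_1} 𝒞 × Option J0.{u_1} → Bool × (Ordinal.{u_1} → Bool) := fun i =>
    i.2.elim (false, fun _ => false) (fun j => (true, val0 j))
  let gf : Y → Bool × (Ordinal.{u_1} → Bool) :=
    Function.extend f lab (fun _ => (false, fun _ => false))
  have g_eval : ∀ i, gf (f i) = lab i := fun i => finj.extend_apply lab _ i
  refine ⟨fun q => {y | (gf y).1 = true ∧ ∀ η < q.len, (gf y).2 η = q.fn η},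
    fun q => ⟨?_, ?_⟩, fun q => ?_, fun q r hrq => ?_⟩
  · rintro ⟨C, hsub, hC⟩
    have hy := fmem (⟨⟨C, hC⟩⟩, none)
    have h1 := (hsub hy).1
    rw [g_eval (⟨⟨C, hC⟩⟩, none)] at h1
    simp [lab] at h1
  · rintro ⟨C, hsub, hC⟩
    have hy := fmem (⟨⟨C, hC⟩⟩, some (enc0 q))
    have h1 := hsub hy
    apply h1
    constructor
    · rw [g_eval (⟨⟨C, hC⟩⟩, some (enc0 q))]
      rfl
    · intro η hη
      rw [g_eval (⟨⟨C, hC⟩⟩, some (enc0 q))]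
      exact val0_enc0 q hη
  · apply Set.eq_empty_iff_forall_notMem.mpr
    rintro y ⟨⟨-, h0⟩, ⟨-, h1⟩⟩
    have hlt : q.len < (q.snoc false).len := Order.lt_succ q.len
    have hlt' : q.len < (q.snoc true).len := Order.lt_succ q.len
    have e0 := h0 q.len hlt
    have e1' := h1 q.len hlt'
    simp only [CSeq.snoc, if_pos rfl] at e0 e1'
    rw [e0] at e1'
    exact Bool.false_ne_true e1'
  · rintro y ⟨hb, hm⟩
    exact ⟨hb, fun η hη => (hm η (lt_of_lt_of_le hη hrq.1)).trans (hrq.2 η hη)⟩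
end

section
/- Let Y be a topological space, Z a Borel subset of Y, and {D^q : q ≤ p} a family of subsets of Y (indexed by extensions q of a fixed p ∈ 2^{<ω₁}) satisfying D^{q⌢0} ∩ D^{q⌢1} = ∅ and D^r ⊆ D^q for r ≤ q. Then {D^q} is a Bernstein tree in Y iff both {D^q ∩ Z} is a Bernstein tree in Z and {D^q \ Z} is a Bernstein tree in Y \ Z. -/
/-- The family {D^q : q ≤ p} is a Bernstein tree relative to the subset W of Y: for each
q extending p, neither D^q ∩ W nor W \\ D^q contains a Cantor set (the disjointness and
monotonicity conditions being assumed separately). -/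
def IsBernsteinTreeOn (Y : Type) [TopologicalSpace Y] (W : Set Y)
    (p : CSeq Bool) (D : CSeq Bool → Set Y) : Prop :=
  ∀ q ≤ p, ¬ HasCantorSubset (D q ∩ W) ∧ ¬ HasCantorSubset (W \ D q)

/-- Monotonicity of `HasCantorSubset`. -/
lemma HasCantorSubset.mono {Y : Type*} [TopologicalSpace Y] {S S' : Set Y}
    (hSS' : S ⊆ S') (h : HasCantorSubset S) : HasCantorSubset S' := by
  obtain ⟨C, hC, he⟩ := h
  exact ⟨C, hC.trans hSS', he⟩

/-- An uncountable Borel subset of a Polish space admits a continuous injection from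
the Cantor space. -/
lemma borel_exists_nat_bool_injection {α : Type*} [TopologicalSpace α] [PolishSpace α]
    [MeasurableSpace α] [BorelSpace α] {s : Set α} (hs : MeasurableSet s)
    (hunc : ¬ s.Countable) :
    ∃ f : (ℕ → Bool) → α, Set.range f ⊆ s ∧ Continuous f ∧ Function.Injective f := by
  obtain ⟨t', ht'le, ht'polish, hclosed, -⟩ := hs.isClopenable
  obtain ⟨f, hrange, hcont, hinj⟩ :=
    @IsClosed.exists_nat_bool_injection_of_not_countable α t' ht'polish s hclosed hunc
  exact ⟨f, hrange, continuous_le_rng ht'le hcont, hinj⟩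

/-- The Cantor space is uncountable. -/
lemma cantor_not_countable : ¬ Countable (ℕ → Bool) := by
  intro h
  have := Cardinal.mk_le_aleph0 (α := ℕ → Bool)
  rw [Cardinal.mk_arrow] at this
  simp at this
  exact absurd this (not_le.2 Cardinal.aleph0_lt_continuum)

/-- Key lemma: every Cantor subset of Y meets a Borel set Z or its complement in a set
containing a Cantor set. -/
lemma hasCantorSubset_inter_or_compl {Y : Type} [TopologicalSpace Y] {S : Set Y}
    (h : HasCantorSubset S) {Z : Set Y} (hZ : @MeasurableSet Y (borel Y) Z) :
    HasCantorSubset (S ∩ Z) ∨ HasCantorSubset (S ∩ Zᶜ) := by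
  classical
  obtain ⟨C, hCS, ⟨e⟩⟩ := h
  set X := ℕ → Bool
  set g : X → Y := fun x => ((e.symm x : C) : Y) with hg
  have hgcont : Continuous g := continuous_subtype_val.comp e.symm.continuous
  have hginj : Function.Injective g := Subtype.val_injective.comp e.symm.injective
  have hgC : ∀ x, g x ∈ C := fun x => (e.symm x).2
  -- the preimage of Z under g is Borel in the Cantor space
  have hgmeas : @Measurable X Y _ (borel Y) g := by
    have := hgcont.borel_measurable
    rwa [← BorelSpace.measurable_eq (α := X)] at this
  have hTmeas : MeasurableSet (g ⁻¹' Z) := hgmeas hZ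
  -- a generic step producing a Cantor subset of S ∩ W from an uncountable Borel T ⊆ g⁻¹ W
  have key : ∀ T : Set X, MeasurableSet T → ¬ T.Countable → ∀ W : Set Y,
      (∀ x ∈ T, g x ∈ W) → HasCantorSubset (S ∩ W) := by
    intro T hTm hTunc W hTW
    haveI : PolishSpace X := {}
    obtain ⟨f, hfr, hfc, hfi⟩ := borel_exists_nat_bool_injection hTm hTunc
    have hfemb : Topology.IsEmbedding f :=
      (hfc.isClosedEmbedding hfi).toIsEmbedding
    have hgemb : Topology.IsEmbedding g :=
      Topology.IsEmbedding.subtypeVal.comp e.symm.isEmbedding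
    have hemb : Topology.IsEmbedding (g ∘ f) := hgemb.comp hfemb
    refine ⟨Set.range (g ∘ f), ?_, ⟨(Topology.IsEmbedding.toHomeomorph hemb).symm⟩⟩
    rintro _ ⟨x, rfl⟩
    exact ⟨hCS (hgC (f x)), hTW (f x) (hfr ⟨x, rfl⟩)⟩
  -- one of g⁻¹ Z, g⁻¹ Zᶜ is uncountable
  by_cases hcnt : (g ⁻¹' Z).Countable
  · right
    refine key (g ⁻¹' Z)ᶜ hTmeas.compl ?_ Zᶜ (fun x hx => hx)
    intro hc
    have : (Set.univ : Set X).Countable := by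
      have := hcnt.union hc
      rwa [Set.union_compl_self] at this
    exact cantor_not_countable (Set.countable_univ_iff.mp this)
  · left
    exact key (g ⁻¹' Z) hTmeas hcnt Z (fun x hx => hx)

/-- For Y a topological space, Z a Borel subset of Y, and a family
{D^q : q ≤ p} satisfying the disjointness and monotonicity conditions, {D^q} is a
Bernstein tree in Y iff {D^q ∩ Z} is a Bernstein tree in Z and {D^q \\ Z} is a
Bernstein tree in Y \\ Z. -/
theorem stmt16 (Y : Type) [TopologicalSpace Y] (Z : Set Y)
    (hZ : @MeasurableSet Y (borel Y) Z) (p : CSeq Bool) (D : CSeq Bool → Set Y)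
    (hdisj : ∀ q ≤ p, D (q.snoc false) ∩ D (q.snoc true) = ∅)
    (hmono : ∀ q ≤ p, ∀ r ≤ q, D r ⊆ D q) :
    IsBernsteinTreeOn Y Set.univ p D ↔
      (IsBernsteinTreeOn Y Z p D ∧ IsBernsteinTreeOn Y Zᶜ p D) := by
  constructor
  · intro h
    constructor
    · intro q hq
      obtain ⟨h1, h2⟩ := h q hq
      constructor
      · exact fun hc => h1 (hc.mono (Set.inter_subset_inter_right _ (Set.subset_univ Z)))
      · exact fun hc => h2 (hc.mono (Set.diff_subset_diff_left (Set.subset_univ Z)))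
    · intro q hq
      obtain ⟨h1, h2⟩ := h q hq
      constructor
      · exact fun hc => h1 (hc.mono (Set.inter_subset_inter_right _ (Set.subset_univ Zᶜ)))
      · exact fun hc => h2 (hc.mono (Set.diff_subset_diff_left (Set.subset_univ Zᶜ)))
  · rintro ⟨hZtree, hZctree⟩ q hq
    obtain ⟨hZ1, hZ2⟩ := hZtree q hq
    obtain ⟨hc1, hc2⟩ := hZctree q hq
    constructor
    · intro hc
      rw [Set.inter_univ] at hc
      rcases hasCantorSubset_inter_or_compl hc hZ with h | h
      · exact hZ1 h
      · exact hc1 h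
    · intro hc
      have hc' : HasCantorSubset (D q)ᶜ := by
        rwa [Set.compl_eq_univ_diff]
      rcases hasCantorSubset_inter_or_compl hc' hZ with h | h
      · exact hZ2 (h.mono (fun x hx => ⟨hx.2, hx.1⟩))
      · exact hc2 (h.mono (fun x hx => ⟨hx.2, hx.1⟩))
end
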